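/- Assume φ̄ ∈ C²([0,1];𝓗) solves the MEP problem and assumption (A) is satisfied. Then λ̄'(0) > 0, λ̄'(1) > 0 and λ̄'(s̄) < 0; moreover λ̄(α) > 0 for all α ∈ (0,s̄) and λ̄(α) < 0 for all α ∈ (s̄,1). -/

import Mathlib

noncomputable section

open Set
open scoped RealInnerProductSpace Topology

variable {H : Type*} [NormedAddCommGroup H] [InnerProductSpace ℝ H] [CompleteSpace H]

/-- Orthogonal projection of `y` onto the span of `v` (`P_v y`). -/
def Pproj (v y : H) : H := ⟪y, ‖v‖⁻¹ • v⟫ • (‖v‖⁻¹ • v)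

/-- Projection of `y` onto the orthogonal complement of `v` (`P_v^⊥ y`). -/
def Pperp (v y : H) : H := y - Pproj v y

/-- `f` is `C¹` on `[a,b]` with derivative `f'`. -/
def C1On {F : Type*} [NormedAddCommGroup F] [NormedSpace ℝ F] (a b : ℝ) (f f' : ℝ → F) : Prop :=
  (∀ α ∈ Icc a b, HasDerivWithinAt f (f' α) (Icc a b) α) ∧ ContinuousOn f' (Icc a b)

/-- `f` is `C²` on `[a,b]`. -/
def C2On {F : Type*} [NormedAddCommGroup F] [NormedSpace ℝ F] (a b : ℝ) (f f' f'' : ℝ → F) : Prop :=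
  C1On a b f f' ∧ C1On a b f' f''

/-- The length `L(φ)` of a curve with derivative `φ'`. -/
def len {F : Type*} [NormedAddCommGroup F] (φ' : ℝ → F) : ℝ := ∫ s in (0:ℝ)..1, ‖φ' s‖

/-- `Γ(φ)(α) = ∫₀^α |φ'| − α L(φ)`. -/
def Gam {F : Type*} [NormedAddCommGroup F] (φ' : ℝ → F) (α : ℝ) : ℝ :=
  (∫ s in (0:ℝ)..α, ‖φ' s‖) - α * len φ'

/-- The admissible class `U` of regular curves joining `yA` to `yB`. -/
def InU (yA yB : H) (φ φ' : ℝ → H) : Prop :=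
  C1On 0 1 φ φ' ∧ φ 0 = yA ∧ φ 1 = yB ∧ ∀ α ∈ Icc (0:ℝ) 1, φ' α ≠ 0

/-- The MEP equations. -/
def SolvesMEP (E : H → ℝ) (φ φ' : ℝ → H) : Prop :=
  (∀ α ∈ Icc (0:ℝ) 1, Pperp (φ' α) (gradient E (φ α)) = 0) ∧
  (∀ α ∈ Icc (0:ℝ) 1, Gam φ' α = 0)

/-- Strong local minimizer. -/
def IsStrongMin (E : H → ℝ) (hess : H → H →L[ℝ] H) (y : H) : Prop :=
  gradient E y = 0 ∧ ∃ c > 0, ∀ u : H, c * ‖u‖ ^ 2 ≤ ⟪hess y u, u⟫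

/-- Index-1 saddle point. -/
def IsIndex1Saddle (E : H → ℝ) (hess : H → H →L[ℝ] H) (y : H) : Prop :=
  gradient E y = 0 ∧
    ∃ v₁ : H, v₁ ≠ 0 ∧ (∃ l < (0:ℝ), hess y v₁ = l • v₁) ∧
      ∃ c > 0, ∀ u : H, ⟪u, v₁⟫ = 0 → c * ‖u‖ ^ 2 ≤ ⟪hess y u, u⟫

/-- Assumption (A). -/
def AssumpA (E : H → ℝ) (hess : H → H →L[ℝ] H) (yA yB : H)
    (φb φb' φb'' : ℝ → H) (sbar : ℝ) : Prop :=
  C2On 0 1 φb φb' φb'' ∧ InU yA yB φb φb' ∧ SolvesMEP E φb φb' ∧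
  sbar ∈ Ioo (0:ℝ) 1 ∧
  IsStrongMin E hess yA ∧ IsStrongMin E hess yB ∧
  IsIndex1Saddle E hess (φb sbar) ∧
  ∀ α ∈ Icc (0:ℝ) 1, gradient E (φb α) = 0 → α = 0 ∨ α = sbar ∨ α = 1

/-- `λ̄(α) = L(φ̄)⁻² (∇E(φ̄(α)), φ̄'(α))`. -/
def lamBar (E : H → ℝ) (φ φ' : ℝ → H) (α : ℝ) : ℝ :=
  ((len φ') ^ 2)⁻¹ * ⟪gradient E (φ α), φ' α⟫

/-- The MEP operator `𝓕`. -/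
def Fop (E : H → ℝ) (sbar σA σB : ℝ) (φ φ' : ℝ → H) (α : ℝ) : H :=
  Pperp (φ' α) (gradient E (φ α))
    - ((‖φ' α‖ - len φ') / len φ') • Pproj (φ' α) (gradient E (φ α))
    + (α * (α - 1) * ‖φ' α‖ / (sbar * (sbar - 1) * len φ')) •
        Pproj (φ' α) (gradient E (φ sbar))
    + ((σA + σB) * (Gam φ' α - α * (α - 1) / (sbar * (sbar - 1)) * Gam φ' sbar)) •
        (‖φ' α‖⁻¹ • φ' α)

/-- Membership in the image space `Y`. -/
def MemY {F : Type*} [NormedAddCommGroup F] [NormedSpace ℝ F] (sbar : ℝ) (f : ℝ → F) : Prop :=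
  ContinuousOn f (Icc (0:ℝ) 1) ∧ f 0 = 0 ∧ f 1 = 0 ∧
  DifferentiableWithinAt ℝ f (Icc (0:ℝ) 1) 0 ∧
  DifferentiableWithinAt ℝ f (Icc (0:ℝ) 1) sbar ∧
  DifferentiableWithinAt ℝ f (Icc (0:ℝ) 1) 1

/-- Membership in the space `X`. -/
def MemX {F : Type*} [NormedAddCommGroup F] [NormedSpace ℝ F] (ψ ψ' : ℝ → F) : Prop :=
  C1On 0 1 ψ ψ' ∧ ψ 0 = 0 ∧ ψ 1 = 0

/-- The `C¹` (and `X`) norm. -/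
def normC1 {F : Type*} [NormedAddCommGroup F] (ψ ψ' : ℝ → F) : ℝ :=
  (⨆ α : Icc (0:ℝ) 1, ‖ψ (α : ℝ)‖) + ⨆ α : Icc (0:ℝ) 1, ‖ψ' (α : ℝ)‖

/-- The weighted norm on `Y`. -/
def normY {F : Type*} [NormedAddCommGroup F] (sbar : ℝ) (f : ℝ → F) : ℝ :=
  (⨆ α : Ioo (0:ℝ) 1, ‖f (α : ℝ)‖ / |(α : ℝ) * ((α : ℝ) - 1)|) +
    ⨆ α : ↥(Icc (0:ℝ) 1 \ {sbar}), ‖f (α : ℝ) - f sbar‖ / |(α : ℝ) - sbar|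

/-- `∫₀¹ (φ̄'(s), ψ'(s))/|φ̄'(s)| ds`. -/
def gInt (φb' ψ' : ℝ → H) : ℝ := ∫ s in (0:ℝ)..1, ⟪φb' s, ψ' s⟫ / ‖φb' s‖

/-- `g_ψ(α)` (the linearisation `δΓ(φ̄)ψ`). -/
def gFun (φb' ψ' : ℝ → H) (α : ℝ) : ℝ :=
  (∫ s in (0:ℝ)..α, ⟪φb' s, ψ' s⟫ / ‖φb' s‖) - α * gInt φb' ψ'

/-- `g_ψ'(α)`. -/
def gFun' (φb' ψ' : ℝ → H) (α : ℝ) : ℝ := ⟪φb' α, ψ' α⟫ / ‖φb' α‖ - gInt φb' ψ'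

/-- The linearised MEP operator `T = δ𝓕(φ̄)`. -/
def Tlin (E : H → ℝ) (hess : H → H →L[ℝ] H) (φb φb' : ℝ → H)
    (sbar σA σB : ℝ) (ψ ψ' : ℝ → H) (α : ℝ) : H :=
  Pperp (φb' α) (hess (φb α) (ψ α) - lamBar E φb φb' α • ψ' α)
    + (α * (α - 1) / (sbar * (sbar - 1))) • Pproj (φb' α) (hess (φb sbar) (ψ sbar))
    + ((σA + σB) * (gFun φb' ψ' α - α * (α - 1) / (sbar * (sbar - 1)) * gFun φb' ψ' sbar)
        - lamBar E φb φb' α * gFun' φb' ψ' α) • (‖φb' α‖⁻¹ • φb' α)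

/-- Assumption (B). -/
def AssumpB (hess : H → H →L[ℝ] H) (yA yB vA vB : H) (σA σB : ℝ) : Prop :=
  hess yA vA = σA • vA ∧ hess yB vB = σB • vB ∧
  (∀ μ ∈ spectrum ℝ (hess yA), σA ≤ μ) ∧
  (∀ μ ∈ spectrum ℝ (hess yB), σB ≤ μ) ∧
  (∃ ε > 0, ∀ μ ∈ spectrum ℝ (hess yA), μ ≠ σA → σA + ε ≤ μ) ∧
  (∃ ε > 0, ∀ μ ∈ spectrum ℝ (hess yB), μ ≠ σB → σB + ε ≤ μ) ∧
  (∀ u : H, hess yA u = σA • u → ∃ c : ℝ, u = c • vA) ∧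
  (∀ u : H, hess yB u = σB • u → ∃ c : ℝ, u = c • vB)

/-- `P_v` as a continuous linear map. -/
def projL (v : H) : H →L[ℝ] H := (innerSL ℝ (‖v‖⁻¹ • v)).smulRight (‖v‖⁻¹ • v)

/-- `P_v^⊥` as a continuous linear map. -/
def projPerpL (v : H) : H →L[ℝ] H := ContinuousLinearMap.id ℝ H - projL v

/-- `B(α) = P⊥ ∇²E(φ̄(α)) P⊥`. -/
def Bop (hess : H → H →L[ℝ] H) (φb φb' : ℝ → H) (α : ℝ) : H →L[ℝ] H :=
  (projPerpL (φb' α)).comp ((hess (φb α)).comp (projPerpL (φb' α)))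

/-- `D(α) y = −(y,t'(α))t(α) − (y,t(α))t'(α)`. -/
def Dop (t t' : ℝ → H) (α : ℝ) : H →L[ℝ] H :=
  -((innerSL ℝ (t' α)).smulRight (t α)) - (innerSL ℝ (t α)).smulRight (t' α)

/-- The operator `A(α)`. -/
def Aop {K : Type*} [NormedAddCommGroup K] [InnerProductSpace ℝ K] [CompleteSpace K]
    (E : H → ℝ) (hess : H → H →L[ℝ] H) (φb φb' t' : ℝ → H)
    (Q Q' : ℝ → K →L[ℝ] H) (α : ℝ) : K →L[ℝ] K :=
  (ContinuousLinearMap.adjoint (Q α)).comp ((Bop hess φb φb' α).comp (Q α))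
    - lamBar E φb φb' α •
        ((ContinuousLinearMap.adjoint (Q α)).comp
            ((Dop (fun s => ‖φb' s‖⁻¹ • φb' s) t' α).comp (Q α))
          - (ContinuousLinearMap.adjoint (Q α)).comp (Q' α))

/-- `ω_S`. -/
def omegaS (hess : H → H →L[ℝ] H) (yS : H) : ℝ :=
  sInf {l : ℝ | l ∈ spectrum ℝ (hess yS) ∧ 0 < l}

/-- `ω_B`. -/
def omegaB (hess : H → H →L[ℝ] H) (yB : H) (σB : ℝ) : ℝ :=
  sInf {l : ℝ | l ∈ spectrum ℝ (hess yB) ∧ l ≠ σB}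

/-- The tube `𝒰_ε` around the path. -/
def Utube (φb : ℝ → H) (ε : ℝ) : Set H := {y : H | ∃ α ∈ Icc (0:ℝ) 1, ‖y - φb α‖ ≤ ε}

/-- Restriction of a second derivative to a subspace. -/
def restrict2 (K : Submodule ℝ H) (T : H →L[ℝ] H →L[ℝ] ℝ) : K →L[ℝ] K →L[ℝ] ℝ :=
  (((ContinuousLinearMap.compL ℝ K H ℝ).flip K.subtypeL)).comp (T.comp K.subtypeL)

/-- `C⁰` distance between `E'` (on the subspace `K`) and `E`, over `S`. -/
def subC0dist (K : Submodule ℝ H) (E : H → ℝ) (E' : K → ℝ) (S : Set K) : ℝ :=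
  ⨆ y : S, |E' y.1 - E (y.1 : H)|

/-- `C¹` distance between `E'` (on the subspace `K`) and `E`, over `S`. -/
def subC1dist (K : Submodule ℝ H) (E : H → ℝ) (E' : K → ℝ) (S : Set K) : ℝ :=
  subC0dist K E E' S +
    ⨆ y : S, ‖fderiv ℝ E' y.1 - (fderiv ℝ E (y.1 : H)).comp K.subtypeL‖

/-- `C²` distance between `E'` (on the subspace `K`) and `E`, over `S`. -/
def subC2dist (K : Submodule ℝ H) (E : H → ℝ) (E' : K → ℝ) (S : Set K) : ℝ :=
  subC1dist K E E' S +
    ⨆ y : S, @norm (K →L[ℝ] K →L[ℝ] ℝ)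
      (ContinuousLinearMap.hasOpNorm (𝕜 := ℝ) (𝕜₂ := ℝ) (σ₁₂ := RingHom.id ℝ) (E := K)
        (F := K →L[ℝ] ℝ))
      (fderiv ℝ (fun z => fderiv ℝ E' z) y.1
        - restrict2 K (fderiv ℝ (fun z => fderiv ℝ E z) (y.1 : H)))


/-!
Since `Γ(φ̄) ≡ 0`, the path has constant speed `L = L(φ̄)`, and `P^⊥ ∇E(φ̄) = 0` then reads
`∇E(φ̄(α)) = λ̄(α) φ̄'(α)`. So `λ̄` vanishes exactly at the critical points `0, s̄, 1`, and there
`λ̄' = L⁻² (∇²E(φ̄) φ̄', φ̄')`, which is positive at the two minimizers; as `λ̄` has no zero on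
`(0, s̄)` or `(s̄, 1)`, this fixes its sign on both intervals. At `s̄`, differentiating
`∇E(φ̄) = λ̄ φ̄'` shows that `φ̄'(s̄)` is an eigenvector of `∇²E(y_S)` with eigenvalue `λ̄'(s̄)`,
which is `≤ 0` because `λ̄ < 0` on `(s̄, 1)`. By symmetry of the Hessian, an eigenvector is either
orthogonal to `v₁`, where `∇²E(y_S)` is coercive, or has eigenvalue `λ₁ < 0`; only the latter is
possible.
-/

section SignOfDerivative

variable {f : ℝ → ℝ} {s t : Set ℝ} {a b x d : ℝ}

theorem HasDerivWithinAt.nonpos_of_slope_nonpos (hd : HasDerivWithinAt f d s x)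
    (hts : t ⊆ s \ {x}) [(𝓝[t] x).NeBot] (hslope : ∀ y ∈ t, slope f x y ≤ 0) : d ≤ 0 :=
  le_of_tendsto ((hasDerivWithinAt_iff_tendsto_slope.mp hd).mono_left (nhdsWithin_mono _ hts))
    (eventually_mem_nhdsWithin.mono hslope)

theorem HasDerivWithinAt.nonpos_of_neg_right (hd : HasDerivWithinAt f d s a) (hab : a < b)
    (hsub : Ioo a b ⊆ s) (hfa : f a = 0) (hneg : ∀ x ∈ Ioo a b, f x < 0) : d ≤ 0 := by
  have := left_nhdsWithin_Ioo_neBot hab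
  refine hd.nonpos_of_slope_nonpos (fun x hx => ⟨hsub hx, hx.1.ne'⟩) fun x hx => ?_
  rw [slope_def_field, hfa, sub_zero]
  exact div_nonpos_of_nonpos_of_nonneg (hneg x hx).le (sub_nonneg.2 hx.1.le)

theorem HasDerivWithinAt.nonpos_of_pos_left (hd : HasDerivWithinAt f d s b) (hab : a < b)
    (hsub : Ioo a b ⊆ s) (hfb : f b = 0) (hpos : ∀ x ∈ Ioo a b, 0 < f x) : d ≤ 0 := by
  have := right_nhdsWithin_Ioo_neBot hab
  refine hd.nonpos_of_slope_nonpos (fun x hx => ⟨hsub hx, hx.2.ne⟩) fun x hx => ?_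
  rw [slope_def_field, hfb, sub_zero]
  exact div_nonpos_of_nonneg_of_nonpos (hpos x hx).le (sub_nonpos.2 hx.2.le)

theorem IsPreconnected.forall_pos_or_forall_neg (hs : IsPreconnected s) (hf : ContinuousOn f s)
    (hne : ∀ x ∈ s, f x ≠ 0) : (∀ x ∈ s, 0 < f x) ∨ ∀ x ∈ s, f x < 0 := by
  by_contra! h
  obtain ⟨⟨x, hx, hfx⟩, y, hy, hfy⟩ := h
  obtain ⟨z, hz, hfz⟩ := hs.intermediate_value hx hy hf ⟨hfx, hfy⟩
  exact hne z hz hfz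

theorem HasDerivWithinAt.pos_of_eq_zero_left (hd : HasDerivWithinAt f d (Icc a b) a)
    (hd0 : 0 < d) (hab : a < b) (hfa : f a = 0) (hf : ContinuousOn f (Ioo a b))
    (hne : ∀ x ∈ Ioo a b, f x ≠ 0) : ∀ x ∈ Ioo a b, 0 < f x :=
  (isPreconnected_Ioo.forall_pos_or_forall_neg hf hne).resolve_right fun hneg =>
    (hd.nonpos_of_neg_right hab Ioo_subset_Icc_self hfa hneg).not_gt hd0

theorem HasDerivWithinAt.neg_of_eq_zero_right (hd : HasDerivWithinAt f d (Icc a b) b)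
    (hd0 : 0 < d) (hab : a < b) (hfb : f b = 0) (hf : ContinuousOn f (Ioo a b))
    (hne : ∀ x ∈ Ioo a b, f x ≠ 0) : ∀ x ∈ Ioo a b, f x < 0 :=
  (isPreconnected_Ioo.forall_pos_or_forall_neg hf hne).resolve_left fun hpos =>
    (hd.nonpos_of_pos_left hab Ioo_subset_Icc_self hfb hpos).not_gt hd0

end SignOfDerivative

theorem norm_eq_len_of_Gam_eq_zero {F : Type*} [NormedAddCommGroup F] [NormedSpace ℝ F]
    {φ φ' : ℝ → F} (hφ : C1On 0 1 φ φ') (hGam : ∀ α ∈ Icc (0:ℝ) 1, Gam φ' α = 0) :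
    ∀ α ∈ Icc (0:ℝ) 1, ‖φ' α‖ = len φ' := by
  intro α hα
  have : Fact (α ∈ Icc (0:ℝ) 1) := ⟨hα⟩
  have hcont : ContinuousOn (fun s => ‖φ' s‖) (Icc 0 1) := hφ.2.norm
  have hint : IntervalIntegrable (fun s => ‖φ' s‖) MeasureTheory.volume 0 α :=
    (hcont.mono (by rw [uIcc_of_le hα.1]; exact Icc_subset_Icc_right hα.2)).intervalIntegrable
  have hFTC : HasDerivWithinAt (fun u => ∫ s in (0:ℝ)..u, ‖φ' s‖) ‖φ' α‖ (Icc 0 1) α :=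
    intervalIntegral.integral_hasDerivWithinAt_right hint
      (hcont.stronglyMeasurableAtFilter_nhdsWithin measurableSet_Icc α) (hcont α hα)
  have hlin : HasDerivWithinAt (fun u => ∫ s in (0:ℝ)..u, ‖φ' s‖) (len φ') (Icc 0 1) α :=
    (hasDerivAt_mul_const (len φ')).hasDerivWithinAt.congr
      (fun β hβ => sub_eq_zero.mp (hGam β hβ)) (sub_eq_zero.mp (hGam α hα))
  exact (uniqueDiffOn_Icc zero_lt_one α hα).eq_deriv _ hFTC hlin

theorem eq_smul_of_Pperp_eq_zero {V : Type*} [NormedAddCommGroup V] [InnerProductSpace ℝ V]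
    {v y : V} (h : Pperp v y = 0) : y = ((‖v‖ ^ 2)⁻¹ * ⟪y, v⟫) • v :=
  calc y = Pproj v y := sub_eq_zero.mp h
    _ = ((‖v‖ ^ 2)⁻¹ * ⟪y, v⟫) • v := by
      rw [Pproj, real_inner_smul_right, smul_smul]
      ring_nf

theorem eq_or_le_of_apply_eq_smul {V : Type*} [NormedAddCommGroup V] [InnerProductSpace ℝ V]
    {T : V →L[ℝ] V} (hT : (T : V →ₗ[ℝ] V).IsSymmetric) {v x : V} {l c d : ℝ}
    (hv : T v = l • v) (hc : ∀ u, ⟪u, v⟫ = 0 → c * ‖u‖ ^ 2 ≤ ⟪T u, u⟫) (hx : x ≠ 0)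
    (hTx : T x = d • x) : d = l ∨ c ≤ d := by
  by_cases hxv : ⟪x, v⟫ = 0
  · right
    have := hc x hxv
    rw [hTx, real_inner_smul_left, real_inner_self_eq_norm_sq] at this
    exact le_of_mul_le_mul_right this (pow_pos (norm_pos_iff.2 hx) 2)
  · left
    apply mul_right_cancel₀ hxv
    calc d * ⟪x, v⟫ = ⟪T x, v⟫ := by rw [hTx, real_inner_smul_left]
      _ = ⟪x, T v⟫ := hT x v
      _ = l * ⟪x, v⟫ := by rw [hv, real_inner_smul_right]

theorem apply_eq_smul_of_comp_eq_smul {V : Type*} [NormedAddCommGroup V] [NormedSpace ℝ V]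
    {G : V → V} {T : V →L[ℝ] V} {φ φ' : ℝ → V} {l : ℝ → ℝ} {s : Set ℝ} {α d : ℝ} {w : V}
    (hG : HasFDerivAt G T (φ α)) (hφ : HasDerivWithinAt φ (φ' α) s α)
    (hφ' : HasDerivWithinAt φ' w s α) (hl : HasDerivWithinAt l d s α)
    (hs : UniqueDiffWithinAt ℝ s α) (heq : ∀ β ∈ s, G (φ β) = l β • φ' β) (hα : α ∈ s)
    (hl0 : l α = 0) : T (φ' α) = d • φ' α := by
  have hcomp : HasDerivWithinAt (G ∘ φ) (T (φ' α)) s α := hG.comp_hasDerivWithinAt α hφ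
  have hprod : HasDerivWithinAt (G ∘ φ) (l α • w + d • φ' α) s α :=
    (hl.smul hφ').congr heq (heq α hα)
  simpa [hl0] using hs.eq_deriv _ hcomp hprod

theorem isSymmetric_of_hasFDerivAt_gradient {E : H → ℝ} (hE : Differentiable ℝ E)
    {T : H →L[ℝ] H} {y : H} (hT : HasFDerivAt (gradient E) T y) :
    (T : H →ₗ[ℝ] H).IsSymmetric := by
  have hE' : ∀ z, HasFDerivAt E (innerSL ℝ (gradient E z)) z := fun z =>
    (hE z).hasGradientAt.hasFDerivAt
  intro u v
  exact (second_derivative_symmetric hE' ((innerSL ℝ).hasFDerivAt.comp y hT) u v).trans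
    (real_inner_comm _ _)

theorem IsStrongMin.inner_hess_pos {E : H → ℝ} {hess : H → H →L[ℝ] H} {y x : H}
    (h : IsStrongMin E hess y) (hx : x ≠ 0) : 0 < ⟪hess y x, x⟫ := by
  obtain ⟨-, c, hc, hle⟩ := h
  exact (mul_pos hc (pow_pos (norm_pos_iff.2 hx) 2)).trans_le (hle x)

theorem lamBar_eq_zero_of_gradient_eq_zero {E : H → ℝ} {φ φ' : ℝ → H} {α : ℝ}
    (h : gradient E (φ α) = 0) : lamBar E φ φ' α = 0 := by
  rw [lamBar, h, inner_zero_left, mul_zero]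

theorem hasDerivWithinAt_lamBar {E : H → ℝ} {T : H →L[ℝ] H} {φ φ' : ℝ → H} {s : Set ℝ}
    {α : ℝ} {w : H} (hT : HasFDerivAt (gradient E) T (φ α))
    (hφ : HasDerivWithinAt φ (φ' α) s α) (hφ' : HasDerivWithinAt φ' w s α) :
    HasDerivWithinAt (lamBar E φ φ')
      ((len φ' ^ 2)⁻¹ * (⟪gradient E (φ α), w⟫ + ⟪T (φ' α), φ' α⟫)) s α :=
  ((hT.comp_hasDerivWithinAt α hφ).inner ℝ hφ').const_mul _

theorem hasDerivWithinAt_lamBar_of_gradient_eq_zero {E : H → ℝ} {T : H →L[ℝ] H}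
    {φ φ' : ℝ → H} {s : Set ℝ} {α : ℝ} {w : H} (hT : HasFDerivAt (gradient E) T (φ α))
    (hφ : HasDerivWithinAt φ (φ' α) s α) (hφ' : HasDerivWithinAt φ' w s α)
    (h : gradient E (φ α) = 0) :
    HasDerivWithinAt (lamBar E φ φ') ((len φ' ^ 2)⁻¹ * ⟪T (φ' α), φ' α⟫) s α := by
  simpa [h] using hasDerivWithinAt_lamBar hT hφ hφ'

namespace AssumpA

variable {E : H → ℝ} {hess : H → H →L[ℝ] H} {yA yB : H} {φb φb' φb'' : ℝ → H} {sbar : ℝ}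

theorem norm_deriv_eq_len (hA : AssumpA E hess yA yB φb φb' φb'' sbar) :
    ∀ α ∈ Icc (0:ℝ) 1, ‖φb' α‖ = len φb' :=
  norm_eq_len_of_Gam_eq_zero hA.1.1 hA.2.2.1.2

theorem len_pos (hA : AssumpA E hess yA yB φb φb' φb'' sbar) : 0 < len φb' := by
  have h0 : (0:ℝ) ∈ Icc (0:ℝ) 1 := left_mem_Icc.2 zero_le_one
  rw [← hA.norm_deriv_eq_len 0 h0]
  exact norm_pos_iff.2 (hA.2.1.2.2.2 0 h0)

theorem isStrongMin_zero (hA : AssumpA E hess yA yB φb φb' φb'' sbar) :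
    IsStrongMin E hess (φb 0) :=
  hA.2.1.2.1 ▸ hA.2.2.2.2.1

theorem isStrongMin_one (hA : AssumpA E hess yA yB φb φb' φb'' sbar) :
    IsStrongMin E hess (φb 1) :=
  hA.2.1.2.2.1 ▸ hA.2.2.2.2.2.1

theorem gradient_eq_lamBar_smul (hA : AssumpA E hess yA yB φb φb' φb'' sbar) :
    ∀ α ∈ Icc (0:ℝ) 1, gradient E (φb α) = lamBar E φb φb' α • φb' α := fun α hα => by
  rw [lamBar, ← hA.norm_deriv_eq_len α hα]
  exact eq_smul_of_Pperp_eq_zero (hA.2.2.1.1 α hα)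

theorem lamBar_ne_zero (hA : AssumpA E hess yA yB φb φb' φb'' sbar) {α : ℝ}
    (hα : α ∈ Icc (0:ℝ) 1) (h0 : α ≠ 0) (hs : α ≠ sbar) (h1 : α ≠ 1) :
    lamBar E φb φb' α ≠ 0 := fun hz => by
  have hcrit : gradient E (φb α) = 0 := by rw [hA.gradient_eq_lamBar_smul α hα, hz, zero_smul]
  rcases hA.2.2.2.2.2.2.2 α hα hcrit with h | h | h <;> contradiction

theorem continuousOn_lamBar (hhess : ∀ y, HasFDerivAt (gradient E) (hess y) y)
    (hA : AssumpA E hess yA yB φb φb' φb'' sbar) :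
    ContinuousOn (lamBar E φb φb') (Icc 0 1) := fun α hα =>
  (hasDerivWithinAt_lamBar (hhess _) (hA.1.1.1 α hα) (hA.1.2.1 α hα)).continuousWithinAt

theorem hasDerivWithinAt_lamBar_of_gradient_eq_zero
    (hhess : ∀ y, HasFDerivAt (gradient E) (hess y) y)
    (hA : AssumpA E hess yA yB φb φb' φb'' sbar) {α : ℝ} (hα : α ∈ Icc (0:ℝ) 1)
    (h : gradient E (φb α) = 0) :
    HasDerivWithinAt (lamBar E φb φb') ((len φb' ^ 2)⁻¹ * ⟪hess (φb α) (φb' α), φb' α⟫)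
      (Icc 0 1) α :=
  _root_.hasDerivWithinAt_lamBar_of_gradient_eq_zero (hhess _) (hA.1.1.1 α hα)
    (hA.1.2.1 α hα) h

theorem exists_hasDerivWithinAt_lamBar_pos (hhess : ∀ y, HasFDerivAt (gradient E) (hess y) y)
    (hA : AssumpA E hess yA yB φb φb' φb'' sbar) {α : ℝ} (hα : α ∈ Icc (0:ℝ) 1)
    (hmin : IsStrongMin E hess (φb α)) :
    ∃ d, HasDerivWithinAt (lamBar E φb φb') d (Icc 0 1) α ∧ 0 < d :=
  ⟨_, hA.hasDerivWithinAt_lamBar_of_gradient_eq_zero hhess hα hmin.1,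
    mul_pos (inv_pos.2 (pow_pos hA.len_pos 2)) (hmin.inner_hess_pos (hA.2.1.2.2.2 α hα))⟩

theorem lamBar_pos (hhess : ∀ y, HasFDerivAt (gradient E) (hess y) y)
    (hA : AssumpA E hess yA yB φb φb' φb'' sbar) :
    ∀ α ∈ Ioo (0:ℝ) sbar, 0 < lamBar E φb φb' α := by
  have hsbar := hA.2.2.2.1
  obtain ⟨d, hd, hd0⟩ := hA.exists_hasDerivWithinAt_lamBar_pos hhess
    (left_mem_Icc.2 zero_le_one) hA.isStrongMin_zero
  refine (hd.mono (Icc_subset_Icc_right hsbar.2.le)).pos_of_eq_zero_left hd0 hsbar.1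
    (lamBar_eq_zero_of_gradient_eq_zero hA.isStrongMin_zero.1)
    ((hA.continuousOn_lamBar hhess).mono fun x hx => ⟨hx.1.le, hx.2.le.trans hsbar.2.le⟩)
    fun x hx => hA.lamBar_ne_zero ⟨hx.1.le, hx.2.le.trans hsbar.2.le⟩ hx.1.ne' hx.2.ne
      (hx.2.trans hsbar.2).ne

theorem lamBar_neg (hhess : ∀ y, HasFDerivAt (gradient E) (hess y) y)
    (hA : AssumpA E hess yA yB φb φb' φb'' sbar) :
    ∀ α ∈ Ioo sbar (1:ℝ), lamBar E φb φb' α < 0 := by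
  have hsbar := hA.2.2.2.1
  obtain ⟨d, hd, hd0⟩ := hA.exists_hasDerivWithinAt_lamBar_pos hhess
    (right_mem_Icc.2 zero_le_one) hA.isStrongMin_one
  refine (hd.mono (Icc_subset_Icc_left hsbar.1.le)).neg_of_eq_zero_right hd0 hsbar.2
    (lamBar_eq_zero_of_gradient_eq_zero hA.isStrongMin_one.1)
    ((hA.continuousOn_lamBar hhess).mono fun x hx => ⟨hsbar.1.le.trans hx.1.le, hx.2.le⟩)
    fun x hx => hA.lamBar_ne_zero ⟨hsbar.1.le.trans hx.1.le, hx.2.le⟩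
      (hsbar.1.trans hx.1).ne' hx.1.ne' hx.2.ne

theorem exists_hasDerivWithinAt_lamBar_neg (hE : Differentiable ℝ E)
    (hhess : ∀ y, HasFDerivAt (gradient E) (hess y) y)
    (hA : AssumpA E hess yA yB φb φb' φb'' sbar) :
    ∃ d, HasDerivWithinAt (lamBar E φb φb') d (Icc 0 1) sbar ∧ d < 0 := by
  have ⟨_, ⟨_, _, _, hreg⟩, _, hsbar, _, _, ⟨hcrit, v, _, ⟨l, hl, hv⟩, c, hc, hcoer⟩, _⟩ := hA
  have hmem : sbar ∈ Icc (0:ℝ) 1 := Ioo_subset_Icc_self hsbar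
  have hlam0 := lamBar_eq_zero_of_gradient_eq_zero (φ' := φb') hcrit
  have hd := hA.hasDerivWithinAt_lamBar_of_gradient_eq_zero hhess hmem hcrit
  refine ⟨_, hd, ?_⟩
  have hnonpos := hd.nonpos_of_neg_right hsbar.2
    (fun x hx => ⟨hsbar.1.le.trans hx.1.le, hx.2.le⟩) hlam0 (hA.lamBar_neg hhess)
  have heig := apply_eq_smul_of_comp_eq_smul (hhess _) (hA.1.1.1 sbar hmem) (hA.1.2.1 sbar hmem)
    hd (uniqueDiffOn_Icc zero_lt_one sbar hmem) hA.gradient_eq_lamBar_smul hmem hlam0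
  rcases eq_or_le_of_apply_eq_smul (isSymmetric_of_hasFDerivAt_gradient hE (hhess _)) hv hcoer
    (hreg sbar hmem) heig with h | h
  · exact h ▸ hl
  · exact absurd (hc.trans_le h) hnonpos.not_gt

end AssumpA

theorem stmt7
    (E : H → ℝ) (hE : ContDiff ℝ 3 E)
    (hess : H → H →L[ℝ] H) (hhess : ∀ y : H, HasFDerivAt (gradient E) (hess y) y)
    (yA yB : H) (φb φb' φb'' : ℝ → H) (sbar : ℝ)
    (hA : AssumpA E hess yA yB φb φb' φb'' sbar) :
    (∃ d : ℝ, HasDerivWithinAt (lamBar E φb φb') d (Icc (0:ℝ) 1) 0 ∧ 0 < d) ∧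
    (∃ d : ℝ, HasDerivWithinAt (lamBar E φb φb') d (Icc (0:ℝ) 1) 1 ∧ 0 < d) ∧
    (∃ d : ℝ, HasDerivWithinAt (lamBar E φb φb') d (Icc (0:ℝ) 1) sbar ∧ d < 0) ∧
    (∀ α ∈ Ioo (0:ℝ) sbar, 0 < lamBar E φb φb' α) ∧
    (∀ α ∈ Ioo sbar (1:ℝ), lamBar E φb φb' α < 0) :=
  ⟨hA.exists_hasDerivWithinAt_lamBar_pos hhess (left_mem_Icc.2 zero_le_one) hA.isStrongMin_zero,
    hA.exists_hasDerivWithinAt_lamBar_pos hhess (right_mem_Icc.2 zero_le_one) hA.isStrongMin_one,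
    hA.exists_hasDerivWithinAt_lamBar_neg (hE.differentiable (by norm_num)) hhess,
    hA.lamBar_pos hhess, hA.lamBar_neg hhess⟩
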